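/- Let A₀, A₁ be smooth vector fields on ℝ^N, with A₀ = ωΥ where ω > 0 is smooth and Υ admits a 2π-periodic flow φ. Let k ≥ 1 and suppose T : (−ε₀,ε₀) × ℝ^N → ℝ^N is smooth, each T_ε := T(ε,·) is a diffeomorphism of ℝ^N, T₀ = id, and there exist smooth vector fields Ā₂,…,Ā_k, each invariant under the flow (i.e. (φ_t)^*Āᵢ = Āᵢ for all t), and a smooth map R : (−ε₀,ε₀) × ℝ^N → ℝ^N such that (D T_ε)⁻¹ ∘ (A₀ + εA₁) ∘ T_ε = A₀ + ε⟨A₁⟩ + Σ_{i=2}^k (ε^i/i!) Āᵢ + ε^{k+1} R(ε,·). Suppose J : ℝ^N → ℝ is smooth, invariant under the flow (J ∘ φ(t,·) = J for all t), and satisfies L_{⟨A₁⟩}J = 0 and L_{Āᵢ}J = 0 for i = 2,…,k. Then for every m ∈ ℝ^N, (L_{A₀+εA₁}(J ∘ T_ε^{-1}))(m) = O(ε^{k+1}) as ε → 0. -/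

import Mathlib

/-!
Conjugation by `T_ε` turns the Lie derivative of `J ∘ T_ε⁻¹` along `A₀ + εA₁` at `m` into the
Lie derivative of `J` along the normal form at `T_ε⁻¹ m`. Flow invariance of `J` kills the term
`A₀ = ωΥ` and the hypotheses on `J` kill `⟨A₁⟩` and the `Āᵢ`, leaving `ε^{k+1} DJ(R)`. This factor
stays bounded because `T_ε⁻¹ m → m`: by the implicit function theorem applied to
`(ε, x) ↦ T_ε x` at `(0, m)`, the equation `T_ε x = m` has a solution depending continuously
on `ε`, and it must be `T_ε⁻¹ m`.
-/

open Real MeasureTheory Asymptotics Set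

noncomputable section

/-- Pullback of a vector field `X` by the time-`t` flow map:
`(φ_t)^*X(m) = (D_mφ(t,·))⁻¹ (X(φ(t,m)))`. -/
def pullVF {N : ℕ} (φ : ℝ → (Fin N → ℝ) → (Fin N → ℝ))
    (X : (Fin N → ℝ) → (Fin N → ℝ)) (t : ℝ) (m : Fin N → ℝ) : Fin N → ℝ :=
  (fderiv ℝ (φ t) m).inverse (X (φ t m))

/-- Average of a vector field along a `2π`-periodic flow. -/
def avgVF {N : ℕ} (φ : ℝ → (Fin N → ℝ) → (Fin N → ℝ))
    (X : (Fin N → ℝ) → (Fin N → ℝ)) (m : Fin N → ℝ) : Fin N → ℝ :=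
  (1 / (2 * π)) • ∫ t in (0:ℝ)..(2 * π), pullVF φ X t m

open Filter Function Topology

section

variable {𝕜 E F : Type*} [NontriviallyNormedField 𝕜]
  [NormedAddCommGroup E] [NormedSpace 𝕜 E] [NormedAddCommGroup F] [NormedSpace 𝕜 F]

theorem fderiv_apply_eq_zero_of_comp_eq_const {f : E → F} {γ : 𝕜 → E} {v : E} {t : 𝕜} {c : F}
    (hf : DifferentiableAt 𝕜 f (γ t)) (hγ : HasDerivAt γ v t) (hc : ∀ s, f (γ s) = c) :
    fderiv 𝕜 f (γ t) v = 0 := by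
  have hconst : HasDerivAt (fun s => f (γ s)) 0 t := by
    simpa only [hc] using hasDerivAt_const t c
  exact (hf.hasFDerivAt.comp_hasDerivAt t hγ).unique hconst

theorem fderiv_eq_inverse_of_leftInverse_of_rightInverse {f : E → F} {g : F → E} {y : F}
    (hl : LeftInverse g f) (hr : RightInverse g f)
    (hf : DifferentiableAt 𝕜 f (g y)) (hg : DifferentiableAt 𝕜 g y) :
    fderiv 𝕜 g y = (fderiv 𝕜 f (g y)).inverse := by
  have hfg : fderiv 𝕜 f (g y) ∘L fderiv 𝕜 g y = .id 𝕜 F := by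
    rw [← fderiv_comp y hf hg, hr.comp_eq_id, fderiv_id]
  have hgf : fderiv 𝕜 g y ∘L fderiv 𝕜 f (g y) = .id 𝕜 E := by
    have hcomp := fderiv_comp (g y) ((hr y).symm ▸ hg : DifferentiableAt 𝕜 g (f (g y))) hf
    rwa [hl.comp_eq_id, fderiv_id, hr y, eq_comm] at hcomp
  exact (ContinuousLinearMap.inverse_eq hfg hgf).symm

theorem fderiv_comp_inverse_apply_of_conj {f g : E → E} {J : E → F} {A B : E → E}
    (hl : LeftInverse g f) (hr : RightInverse g f) (hf : Differentiable 𝕜 f)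
    (hg : Differentiable 𝕜 g) (hJ : Differentiable 𝕜 J)
    (hconj : ∀ x, (fderiv 𝕜 f x).inverse (A (f x)) = B x) (y : E) :
    fderiv 𝕜 (fun x => J (g x)) y (A y) = fderiv 𝕜 J (g y) (B (g y)) := by
  rw [fderiv_fun_comp y (hJ _) (hg y),
    fderiv_eq_inverse_of_leftInverse_of_rightInverse hl hr (hf _) (hg y),
    ContinuousLinearMap.comp_apply, ← hconj, hr y]

theorem ContDiffOn.differentiable_slice {P : Type*} [NormedAddCommGroup P] [NormedSpace 𝕜 P]
    {n : WithTop ℕ∞} {T : P → E → F} {s : Set P} {ε : P}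
    (hT : ContDiffOn 𝕜 n (fun p : P × E => T p.1 p.2) (s ×ˢ univ)) (hn : n ≠ 0)
    (hs : IsOpen s) (hε : ε ∈ s) : Differentiable 𝕜 (T ε) := fun x =>
  ((hT.contDiffAt (prod_mem_nhds (hs.mem_nhds hε) univ_mem)).comp x
    (contDiffAt_const.prodMk contDiffAt_id)).differentiableAt hn

end

theorem Asymptotics.isBigO_of_eventuallyEq_mul_of_tendsto {α 𝕜 : Type*} [NormedField 𝕜]
    {l : Filter α} {f g h : α → 𝕜} {c : 𝕜}
    (hf : f =ᶠ[l] fun x => g x * h x) (hh : Tendsto h l (𝓝 c)) : f =O[l] g :=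
  hf.trans_isBigO <| by simpa using (isBigO_refl g l).mul (hh.isBigO_one 𝕜)

theorem tendsto_leftInverse_apply {𝕜 E : Type*} [RCLike 𝕜] [NormedAddCommGroup E]
    [NormedSpace 𝕜 E] [CompleteSpace E] {n : WithTop ℕ∞} {T Tinv : 𝕜 → E → E} {m : E}
    (hT : ContDiffAt 𝕜 n (fun p : 𝕜 × E => T p.1 p.2) (0, m)) (hn : n ≠ 0)
    (hT0 : ∀ x, T 0 x = x) (hinv : ∀ᶠ ε in 𝓝 0, LeftInverse (Tinv ε) (T ε)) :
    Tendsto (fun ε => Tinv ε m) (𝓝 0) (𝓝 m) := by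
  have hpartial : fderiv 𝕜 (fun p : 𝕜 × E => T p.1 p.2) (0, m) ∘L .inr 𝕜 𝕜 E = .id 𝕜 E := by
    refine ((hT.differentiableAt hn).hasFDerivAt.comp m
      (hasFDerivAt_prodMk_right (0 : 𝕜) m)).unique ?_
    rw [show (fun p : 𝕜 × E => T p.1 p.2) ∘ (fun x => ((0 : 𝕜), x)) = id from funext hT0]
    exact hasFDerivAt_id m
  have hinvertible :
      (fderiv 𝕜 (fun p : 𝕜 × E => T p.1 p.2) (0, m) ∘L .inr 𝕜 𝕜 E).IsInvertible :=
    hpartial ▸ ⟨.refl 𝕜 E, rfl⟩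
  have hψ : Tendsto (hT.implicitFunction hn hinvertible) (𝓝 0) (𝓝 m) := by
    simpa only [hT.implicitFunction_apply_self] using
      (hT.contDiffAt_implicitFunction hn hinvertible).continuousAt.tendsto
  refine hψ.congr' ?_
  filter_upwards [hT.eventually_apply_implicitFunction hn hinvertible, hinv] with ε hε hl
  rw [← hl (hT.implicitFunction hn hinvertible ε), hε, hT0]

theorem stmt4_general {N : ℕ} (k : ℕ)
    (ω : (Fin N → ℝ) → ℝ)
    (Υ : (Fin N → ℝ) → (Fin N → ℝ))
    (φ : ℝ → (Fin N → ℝ) → (Fin N → ℝ))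
    (hφ0 : ∀ m, φ 0 m = m)
    (hφ' : ∀ t m, HasDerivAt (fun s => φ s m) (Υ (φ t m)) t)
    (A₁ : (Fin N → ℝ) → (Fin N → ℝ))
    (ε₀ : ℝ) (hε₀ : 0 < ε₀)
    (T Tinv : ℝ → (Fin N → ℝ) → (Fin N → ℝ))
    (hT_smooth : ContDiffOn ℝ (⊤ : ℕ∞) (fun p : ℝ × (Fin N → ℝ) => T p.1 p.2)
      ((Ioo (-ε₀) ε₀) ×ˢ (univ : Set (Fin N → ℝ))))
    (hT0 : ∀ m, T 0 m = m)
    (hT_diffeo : ∀ ε ∈ Ioo (-ε₀) ε₀, Function.Bijective (T ε) ∧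
      ContDiff ℝ (⊤ : ℕ∞) (Tinv ε) ∧
      Function.LeftInverse (Tinv ε) (T ε) ∧ Function.RightInverse (Tinv ε) (T ε))
    (Abar : ℕ → (Fin N → ℝ) → (Fin N → ℝ))
    (R : ℝ → (Fin N → ℝ) → (Fin N → ℝ))
    (hR_smooth : ContDiffOn ℝ (⊤ : ℕ∞) (fun p : ℝ × (Fin N → ℝ) => R p.1 p.2)
      ((Ioo (-ε₀) ε₀) ×ˢ (univ : Set (Fin N → ℝ))))
    (hconj : ∀ ε ∈ Ioo (-ε₀) ε₀, ∀ m,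
      (fderiv ℝ (T ε) m).inverse (ω (T ε m) • Υ (T ε m) + ε • A₁ (T ε m)) =
        ω m • Υ m + ε • avgVF φ A₁ m
          + ∑ i ∈ Finset.Icc 2 k, (ε ^ i / (Nat.factorial i : ℝ)) • Abar i m
          + ε ^ (k + 1) • R ε m)
    (J : (Fin N → ℝ) → ℝ) (hJ_smooth : ContDiff ℝ (⊤ : ℕ∞) J)
    (hJ_inv : ∀ t m, J (φ t m) = J m)
    (hJ_avg : ∀ m, fderiv ℝ J m (avgVF φ A₁ m) = 0)
    (hJ_Abar : ∀ i, 2 ≤ i → i ≤ k → ∀ m, fderiv ℝ J m (Abar i m) = 0) :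
    ∀ m, (fun ε : ℝ =>
        fderiv ℝ (fun n => J (Tinv ε n)) m (ω m • Υ m + ε • A₁ m))
      =O[nhds 0] fun ε : ℝ => ε ^ (k + 1) := by
  intro m
  have htop : ((⊤ : ℕ∞) : WithTop ℕ∞) ≠ 0 := by simp
  have hIoo : Ioo (-ε₀) ε₀ ∈ 𝓝 (0 : ℝ) := Ioo_mem_nhds (neg_neg_of_pos hε₀) hε₀
  have hdom : Ioo (-ε₀) ε₀ ×ˢ (univ : Set (Fin N → ℝ)) ∈ 𝓝 ((0 : ℝ), m) :=
    prod_mem_nhds hIoo univ_mem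
  have hJ : Differentiable ℝ J := hJ_smooth.differentiable htop
  have hJΥ (q : Fin N → ℝ) : fderiv ℝ J q (Υ q) = 0 := by
    simpa only [hφ0] using
      fderiv_apply_eq_zero_of_comp_eq_const (hJ _) (hφ' 0 q) (fun s => hJ_inv s q)
  have hsum (ε : ℝ) (p : Fin N → ℝ) : fderiv ℝ J p (∑ i ∈ Finset.Icc 2 k,
      (ε ^ i / (Nat.factorial i : ℝ)) • Abar i p) = 0 := by
    simp only [map_sum, map_smul]
    refine Finset.sum_eq_zero fun i hi => ?_
    rw [hJ_Abar i (Finset.mem_Icc.mp hi).1 (Finset.mem_Icc.mp hi).2, smul_zero]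
  have hlie : ∀ ε ∈ Ioo (-ε₀) ε₀,
      fderiv ℝ (fun n => J (Tinv ε n)) m (ω m • Υ m + ε • A₁ m)
        = ε ^ (k + 1) * fderiv ℝ J (Tinv ε m) (R ε (Tinv ε m)) := by
    intro ε hε
    obtain ⟨-, hTinv, hl, hr⟩ := hT_diffeo ε hε
    rw [fderiv_comp_inverse_apply_of_conj (A := fun x => ω x • Υ x + ε • A₁ x) hl hr
      (hT_smooth.differentiable_slice htop isOpen_Ioo hε) (hTinv.differentiable htop) hJ
      (hconj ε hε)]
    simp only [map_add, map_smul, hsum, hJΥ, hJ_avg, smul_eq_mul, mul_zero, zero_add]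
  have hTinv : Tendsto (fun ε => Tinv ε m) (𝓝 0) (𝓝 m) :=
    tendsto_leftInverse_apply (hT_smooth.contDiffAt hdom) htop hT0
      (eventually_of_mem hIoo fun ε hε => (hT_diffeo ε hε).2.2.1)
  have hremainder : Tendsto (fun ε => fderiv ℝ J (Tinv ε m) (R ε (Tinv ε m))) (𝓝 0)
      (𝓝 (fderiv ℝ J m (R 0 m))) := by
    have hR := (hR_smooth.continuousOn.continuousAt hdom).tendsto.comp
      (tendsto_id.prodMk_nhds hTinv)
    have hDJ := ((hJ_smooth.continuous_fderiv htop).tendsto m).comp hTinv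
    exact (isBoundedBilinearMap_apply.continuous.tendsto _).comp (hDJ.prodMk_nhds hR)
  exact isBigO_of_eventuallyEq_mul_of_tendsto (eventuallyEq_of_mem hIoo hlie) hremainder

/-- If a smooth family of diffeomorphisms `T_ε` (with `T₀ = id`) puts
the perturbed field `A₀ + εA₁` into an `S¹`-invariant normal form of order `k`, and
the flow-invariant function `J` is a first integral of the truncated normal form,
then `J ∘ T_ε⁻¹` is an approximate first integral of order `k` for `A₀ + εA₁`. -/
theorem stmt4 {N : ℕ} (k : ℕ) (hk : 1 ≤ k)
    (ω : (Fin N → ℝ) → ℝ) (hω_smooth : ContDiff ℝ (⊤ : ℕ∞) ω) (hω_pos : ∀ m, 0 < ω m)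
    (Υ : (Fin N → ℝ) → (Fin N → ℝ)) (hΥ : ContDiff ℝ (⊤ : ℕ∞) Υ)
    (φ : ℝ → (Fin N → ℝ) → (Fin N → ℝ))
    (hφ_smooth : ContDiff ℝ (⊤ : ℕ∞) (fun p : ℝ × (Fin N → ℝ) => φ p.1 p.2))
    (hφ0 : ∀ m, φ 0 m = m)
    (hφ' : ∀ t m, HasDerivAt (fun s => φ s m) (Υ (φ t m)) t)
    (hper : ∀ t m, φ (t + 2 * π) m = φ t m)
    (A₁ : (Fin N → ℝ) → (Fin N → ℝ)) (hA₁ : ContDiff ℝ (⊤ : ℕ∞) A₁)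
    (ε₀ : ℝ) (hε₀ : 0 < ε₀)
    (T Tinv : ℝ → (Fin N → ℝ) → (Fin N → ℝ))
    (hT_smooth : ContDiffOn ℝ (⊤ : ℕ∞) (fun p : ℝ × (Fin N → ℝ) => T p.1 p.2)
      ((Ioo (-ε₀) ε₀) ×ˢ (univ : Set (Fin N → ℝ))))
    (hT0 : ∀ m, T 0 m = m)
    (hT_diffeo : ∀ ε ∈ Ioo (-ε₀) ε₀, Function.Bijective (T ε) ∧
      ContDiff ℝ (⊤ : ℕ∞) (Tinv ε) ∧
      Function.LeftInverse (Tinv ε) (T ε) ∧ Function.RightInverse (Tinv ε) (T ε))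
    (Abar : ℕ → (Fin N → ℝ) → (Fin N → ℝ))
    (hAbar_smooth : ∀ i, 2 ≤ i → i ≤ k → ContDiff ℝ (⊤ : ℕ∞) (Abar i))
    (hAbar_inv : ∀ i, 2 ≤ i → i ≤ k → ∀ t m, pullVF φ (Abar i) t m = Abar i m)
    (R : ℝ → (Fin N → ℝ) → (Fin N → ℝ))
    (hR_smooth : ContDiffOn ℝ (⊤ : ℕ∞) (fun p : ℝ × (Fin N → ℝ) => R p.1 p.2)
      ((Ioo (-ε₀) ε₀) ×ˢ (univ : Set (Fin N → ℝ))))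
    (hconj : ∀ ε ∈ Ioo (-ε₀) ε₀, ∀ m,
      (fderiv ℝ (T ε) m).inverse (ω (T ε m) • Υ (T ε m) + ε • A₁ (T ε m)) =
        ω m • Υ m + ε • avgVF φ A₁ m
          + ∑ i ∈ Finset.Icc 2 k, (ε ^ i / (Nat.factorial i : ℝ)) • Abar i m
          + ε ^ (k + 1) • R ε m)
    (J : (Fin N → ℝ) → ℝ) (hJ_smooth : ContDiff ℝ (⊤ : ℕ∞) J)
    (hJ_inv : ∀ t m, J (φ t m) = J m)
    (hJ_avg : ∀ m, fderiv ℝ J m (avgVF φ A₁ m) = 0)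
    (hJ_Abar : ∀ i, 2 ≤ i → i ≤ k → ∀ m, fderiv ℝ J m (Abar i m) = 0) :
    ∀ m, (fun ε : ℝ =>
        fderiv ℝ (fun n => J (Tinv ε n)) m (ω m • Υ m + ε • A₁ m))
      =O[nhds 0] fun ε : ℝ => ε ^ (k + 1) :=
  stmt4_general k ω Υ φ hφ0 hφ' A₁ ε₀ hε₀ T Tinv hT_smooth hT0 hT_diffeo Abar R hR_smooth hconj J
    hJ_smooth hJ_inv hJ_avg hJ_Abar
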